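/- Let L₀ be a finite co-Heyting algebra, L an extension of L₀, and (x₁, x₂) a primitive tuple over L₀ with witness g ∈ JoinIrr(L₀). Then g = g(x₁, L₀) = g(x₂, L₀), where g(x, L₀) is the infimum of all elements of L₀ above x. -/

import Mathlib

/-- `Ll b a` means `b ≪ a`: `a \ b = a` and `b ≤ a`. -/
def Ll {L : Type*} [CoheytingAlgebra L] (b a : L) : Prop := a \ b = a ∧ b ≤ a

/-- `S` is (the underlying set of) a co-Heyting subalgebra. -/
def IsSubalg {L : Type*} [CoheytingAlgebra L] (S : Set L) : Prop :=
  ⊥ ∈ S ∧ ⊤ ∈ S ∧ ∀ a ∈ S, ∀ b ∈ S, a ⊔ b ∈ S ∧ a ⊓ b ∈ S ∧ a \ b ∈ S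

/-- `g` is join irreducible in the subalgebra `S`. -/
def SupIrredIn {L : Type*} [CoheytingAlgebra L] (S : Set L) (g : L) : Prop :=
  g ∈ S ∧ g ≠ ⊥ ∧ ∀ x ∈ S, ∀ y ∈ S, g = x ⊔ y → g = x ∨ g = y

/-- `(x₁, x₂)` is a primitive tuple over the subalgebra `S`, with witness `g`
(join irreducible in `S`) whose predecessor in `S` is `gm` (`g⁻`). -/
def Primitive {L : Type*} [CoheytingAlgebra L] (S : Set L) (g gm x₁ x₂ : L) : Prop :=
  x₁ ∉ S ∧ x₂ ∉ S ∧ SupIrredIn S g ∧ IsLUB {b | b ∈ S ∧ b < g} gm ∧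
  gm ⊓ x₁ ∈ S ∧ gm ⊓ x₂ ∈ S ∧
  ((x₁ = x₂ ∧ Ll (gm ⊓ x₁) x₁ ∧ Ll x₁ g) ∨
   (x₁ ≠ x₂ ∧ x₁ ⊓ x₂ ∈ S ∧ g \ x₁ = x₂ ∧ g \ x₂ = x₁))

/-- `T` is the co-Heyting subalgebra generated by `S ∪ {x₁, x₂}`. -/
def GeneratesOver {L : Type*} [CoheytingAlgebra L] (S T : Set L) (x₁ x₂ : L) : Prop :=
  IsSubalg T ∧ S ⊆ T ∧ x₁ ∈ T ∧ x₂ ∈ T ∧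
  ∀ Tp : Set L, IsSubalg Tp → S ⊆ Tp → x₁ ∈ Tp → x₂ ∈ Tp → T ⊆ Tp

/-! Every `a ∈ S` splits `g` as `(g ⊓ a) ⊔ (g \ a)` inside `S`, so join irreducibility forces
`g ≤ a` or `g ⊓ a < g`; in the second case `g ⊓ a ≤ g⁻` (`gm`). For `x ≤ g` with `x ≤ a` the
second case would give `x = g⁻ ⊓ x ∈ S`, so `g` is the least element of `S` above `x`. Both
components of a primitive tuple lie below `g`, either by `x ≪ g` or because each is `g` minus the
other. -/

lemma inf_sup_sdiff_self {L : Type*} [GeneralizedCoheytingAlgebra L] (a b : L) :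
    a ⊓ b ⊔ a \ b = a :=
  le_antisymm (sup_le inf_le_left sdiff_le) (sdiff_le_iff.mp (sdiff_inf_self_left a b).le)

section Subalgebra

variable {L : Type*} [CoheytingAlgebra L] {S : Set L} {g gm a x : L}

lemma SupIrredIn.le_or_inf_le_of_isLUB (hS : IsSubalg S) (hg : SupIrredIn S g)
    (hgm : IsLUB {b | b ∈ S ∧ b < g} gm) (ha : a ∈ S) : g ≤ a ∨ g ⊓ a ≤ gm := by
  obtain ⟨hgS, -, hirr⟩ := hg
  obtain ⟨-, hinf, hsdiff⟩ := hS.2.2 g hgS a ha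
  rcases hirr _ hinf _ hsdiff (inf_sup_sdiff_self g a).symm with h | h
  · exact .inl (h.le.trans inf_le_right)
  · refine or_iff_not_imp_left.mpr fun hga => hgm.1 ⟨hinf, inf_le_left.lt_of_ne fun h' => ?_⟩
    exact hga (h'.ge.trans inf_le_right)

lemma SupIrredIn.isLeast_of_inf_pred_mem (hS : IsSubalg S) (hg : SupIrredIn S g)
    (hgm : IsLUB {b | b ∈ S ∧ b < g} gm) (hxS : x ∉ S) (hgmx : gm ⊓ x ∈ S) (hxg : x ≤ g) :
    IsLeast {a | a ∈ S ∧ x ≤ a} g := by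
  refine ⟨⟨hg.1, hxg⟩, fun a ⟨ha, hxa⟩ => ?_⟩
  refine (hg.le_or_inf_le_of_isLUB hS hgm ha).resolve_right fun hle => hxS ?_
  exact inf_eq_right.mpr ((le_inf hxg hxa).trans hle) ▸ hgmx

end Subalgebra

section Primitive

variable {L : Type*} [CoheytingAlgebra L] {S : Set L} {g gm x₁ x₂ : L}

lemma Primitive.left_le (hp : Primitive S g gm x₁ x₂) : x₁ ≤ g := by
  rcases hp.2.2.2.2.2.2 with ⟨-, -, -, h⟩ | ⟨-, -, -, h⟩
  · exact h
  · exact h ▸ sdiff_le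

lemma Primitive.symm (hp : Primitive S g gm x₁ x₂) : Primitive S g gm x₂ x₁ := by
  obtain ⟨hx₁, hx₂, hg, hgm, hgmx₁, hgmx₂, hcase⟩ := hp
  refine ⟨hx₂, hx₁, hg, hgm, hgmx₂, hgmx₁, ?_⟩
  rcases hcase with ⟨rfl, h⟩ | ⟨hne, hinf, h₁, h₂⟩
  · exact .inl ⟨rfl, h⟩
  · exact .inr ⟨hne.symm, inf_comm x₁ x₂ ▸ hinf, h₂, h₁⟩

lemma Primitive.isGLB_left (hS : IsSubalg S) (hp : Primitive S g gm x₁ x₂) :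
    IsGLB {a | a ∈ S ∧ x₁ ≤ a} g := by
  have hx₁g := hp.left_le
  obtain ⟨hx₁, -, hg, hgm, hgmx₁, -⟩ := hp
  exact (hg.isLeast_of_inf_pred_mem hS hgm hx₁ hgmx₁ hx₁g).isGLB

end Primitive

theorem primitive_witness_eq_inf {L : Type*} [CoheytingAlgebra L] (S : Set L)
    (hS : IsSubalg S) (g gm x₁ x₂ : L)
    (hp : Primitive S g gm x₁ x₂) :
    IsGLB {a | a ∈ S ∧ x₁ ≤ a} g ∧ IsGLB {a | a ∈ S ∧ x₂ ≤ a} g :=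
  ⟨hp.isGLB_left hS, hp.symm.isGLB_left hS⟩
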